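/- arXiv:1905.05828 — 4 statements merged into one kernel-verified Lean document; each statement's English description precedes it below -/
import Mathlib

section
/- Under the stability setup, the semi-dual suboptimality gap is equivalent, up to constants depending only on M, to the squared L²(P)-distance between gradients: (1/(8M)) · ∫ ‖∇f(x) − ∇f₀(x)‖₂² dP(x) ≤ S(f) − S(f₀) ≤ 2M · ∫ ‖∇f(x) − ∇f₀(x)‖₂² dP(x). -/
open MeasureTheory Set RealInnerProductSpace

/-!
For `x ∈ Ω_P` put `y = ∇f₀ x` and `p = ∇f x`. Since `f₀` is convex on the convex set `Ω̃`, `x`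
attains the supremum defining `f₀*(y)`, so `f₀ x + f₀*(y) = ⟪x, y⟫`. For `f`, the quadratic lower
Taylor bound and AM–GM give `f x + f*(y) - ⟪x, y⟫ ≤ M ‖p - y‖²`; testing the supremum at
`x + (3M)⁻¹ (y - p)`, which lies in `Ω̃` because `‖p - y‖ ≤ 3M`, and using the quadratic upper
Taylor bound gives `f x + f*(y) - ⟪x, y⟫ ≥ 2 ‖p - y‖² / (9M)`. As `Q = (∇f₀)_# P`, `S(f) - S(f₀)` is
the `P`-integral of `f x + f*(y) - f₀ x - f₀*(y)`, so it is squeezed between the integrals of these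
bounds.
-/

/-- The convex conjugate of `g` relative to the compact set `Ωt`:
`g*(y) = sup_{x ∈ Ωt} (⟨x, y⟩ − g(x))`. -/
noncomputable def conjOn (d : ℕ) (Ωt : Set (EuclideanSpace ℝ (Fin d)))
    (g : EuclideanSpace ℝ (Fin d) → ℝ) (y : EuclideanSpace ℝ (Fin d)) : ℝ :=
  sSup ((fun x => ⟪x, y⟫ - g x) '' Ωt)

/-- The semi-dual objective `S(g) = ∫ g dP + ∫ g* dQ`. -/
noncomputable def semiDual (d : ℕ) (Ωt : Set (EuclideanSpace ℝ (Fin d)))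
    (P Q : Measure (EuclideanSpace ℝ (Fin d))) (g : EuclideanSpace ℝ (Fin d) → ℝ) : ℝ :=
  ∫ x, g x ∂P + ∫ y, conjOn d Ωt g y ∂Q

section Calculus

lemma monotoneOn_Icc_of_hasDerivAt_nonneg {f f' : ℝ → ℝ} {a b : ℝ}
    (hf : ∀ t ∈ Icc a b, HasDerivAt f (f' t) t) (hf' : ∀ t ∈ Ioo a b, 0 ≤ f' t) :
    MonotoneOn f (Icc a b) := by
  refine monotoneOn_of_hasDerivWithinAt_nonneg (convex_Icc a b)
    (fun t ht => (hf t ht).continuousAt.continuousWithinAt) (fun t ht => ?_) (by simpa using hf')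
  rw [interior_Icc] at ht ⊢
  exact (hf t (Ioo_subset_Icc_self ht)).hasDerivWithinAt

lemma taylor_lower_of_le_secondDeriv {ψ ψ' ψ'' : ℝ → ℝ} {a b μ : ℝ} (hab : a ≤ b)
    (hψ : ∀ t ∈ Icc a b, HasDerivAt ψ (ψ' t) t) (hψ' : ∀ t ∈ Icc a b, HasDerivAt ψ' (ψ'' t) t)
    (hμ : ∀ t ∈ Icc a b, μ ≤ ψ'' t) :
    ψ a + ψ' a * (b - a) + μ / 2 * (b - a) ^ 2 ≤ ψ b := by
  have hslope : MonotoneOn (fun t => ψ' t - μ * t) (Icc a b) :=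
    monotoneOn_Icc_of_hasDerivAt_nonneg
      (fun t ht => ((hψ' t ht).sub ((hasDerivAt_id' t).const_mul μ)).congr_deriv (by ring))
      (fun t ht => sub_nonneg.2 (hμ t (Ioo_subset_Icc_self ht)))
  have hgap : MonotoneOn (fun t => ψ t - ψ' a * t - μ / 2 * (t - a) ^ 2) (Icc a b) := by
    refine monotoneOn_Icc_of_hasDerivAt_nonneg (f' := fun t => ψ' t - ψ' a - μ * (t - a))
      (fun t ht => ?_) (fun t ht => ?_)
    · have hsq := (((hasDerivAt_id' t).sub_const a).pow 2).const_mul (μ / 2)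
      exact (((hψ t ht).sub ((hasDerivAt_id' t).const_mul (ψ' a))).sub hsq).congr_deriv
        (by ring)
    · have := hslope (left_mem_Icc.2 hab) (Ioo_subset_Icc_self ht) ht.1.le
      linarith
  have := hgap (left_mem_Icc.2 hab) (right_mem_Icc.2 hab) hab
  simp only [sub_self, zero_pow two_ne_zero, mul_zero, sub_zero] at this
  linarith

lemma taylor_upper_of_secondDeriv_le {ψ ψ' ψ'' : ℝ → ℝ} {a b L : ℝ} (hab : a ≤ b)
    (hψ : ∀ t ∈ Icc a b, HasDerivAt ψ (ψ' t) t) (hψ' : ∀ t ∈ Icc a b, HasDerivAt ψ' (ψ'' t) t)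
    (hL : ∀ t ∈ Icc a b, ψ'' t ≤ L) :
    ψ b ≤ ψ a + ψ' a * (b - a) + L / 2 * (b - a) ^ 2 := by
  have := taylor_lower_of_le_secondDeriv (ψ := -ψ) (ψ' := -ψ') (ψ'' := -ψ'') (μ := -L) hab
    (fun t ht => (hψ t ht).neg) (fun t ht => (hψ' t ht).neg) (fun t ht => neg_le_neg (hL t ht))
  simp only [Pi.neg_apply] at this
  linarith

end Calculus

section Gradient

variable {E : Type*} [NormedAddCommGroup E] [InnerProductSpace ℝ E] [CompleteSpace E]

lemma measurable_gradient [MeasurableSpace E] [BorelSpace E] [SecondCountableTopology E]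
    (φ : E → ℝ) : Measurable (gradient φ) :=
  (InnerProductSpace.toDual ℝ E).symm.continuous.measurable.comp (measurable_fderiv ℝ φ)

lemma ContDiffAt.contDiffAt_gradient {φ : E → ℝ} {x : E} (hφ : ContDiffAt ℝ 2 φ x) :
    ContDiffAt ℝ 1 (gradient φ) x :=
  (InnerProductSpace.toDual ℝ E).symm.contDiff.contDiffAt.comp x (hφ.fderiv_right le_rfl)

lemma ContDiffAt.hasDerivAt_along_line {φ : E → ℝ} {x v : E} {t : ℝ}
    (hφ : ContDiffAt ℝ 2 φ (x + t • v)) :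
    HasDerivAt (fun t : ℝ => φ (x + t • v)) ⟪gradient φ (x + t • v), v⟫ t ∧
    HasDerivAt (fun t : ℝ => ⟪gradient φ (x + t • v), v⟫)
      ⟪fderiv ℝ (gradient φ) (x + t • v) v, v⟫ t := by
  have hline : HasDerivAt (fun t : ℝ => x + t • v) v t := by
    simpa using ((hasDerivAt_id t).smul_const v).const_add x
  refine ⟨?_, ?_⟩
  · rw [inner_gradient_left]
    exact (hφ.differentiableAt two_ne_zero).hasFDerivAt.comp_hasDerivAt t hline
  · have hgrad := (hφ.contDiffAt_gradient.differentiableAt one_ne_zero).hasFDerivAt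
    simpa using (hgrad.comp_hasDerivAt t hline).inner ℝ (hasDerivAt_const t v)

variable {s : Set E} {φ : E → ℝ} {x z : E}

lemma continuousOn_gradient_of_contDiffAt (hφ : ∀ w ∈ s, ContDiffAt ℝ 2 φ w) :
    ContinuousOn (gradient φ) s :=
  continuousOn_of_forall_continuousAt fun w hw => (hφ w hw).contDiffAt_gradient.continuousAt

lemma Convex.taylor_lower_of_le_hessian (hs : Convex ℝ s) (hφ : ∀ w ∈ s, ContDiffAt ℝ 2 φ w)
    {μ : ℝ} (hμ : ∀ w ∈ s, ∀ v, μ * ‖v‖ ^ 2 ≤ ⟪fderiv ℝ (gradient φ) w v, v⟫)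
    (hx : x ∈ s) (hz : z ∈ s) :
    φ x + ⟪gradient φ x, z - x⟫ + μ / 2 * ‖z - x‖ ^ 2 ≤ φ z := by
  have hseg : ∀ t ∈ Icc (0 : ℝ) 1, x + t • (z - x) ∈ s := fun t ht => hs.add_smul_sub_mem hx hz ht
  have := taylor_lower_of_le_secondDeriv zero_le_one
    (fun t ht => (hφ _ (hseg t ht)).hasDerivAt_along_line.1)
    (fun t ht => (hφ _ (hseg t ht)).hasDerivAt_along_line.2) (fun t ht => hμ _ (hseg t ht) (z - x))
  simp only [zero_smul, add_zero, one_smul, add_sub_cancel, sub_zero, mul_one, one_pow] at this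
  linarith

lemma Convex.taylor_upper_of_hessian_le (hs : Convex ℝ s) (hφ : ∀ w ∈ s, ContDiffAt ℝ 2 φ w)
    {L : ℝ} (hL : ∀ w ∈ s, ∀ v, ⟪fderiv ℝ (gradient φ) w v, v⟫ ≤ L * ‖v‖ ^ 2)
    (hx : x ∈ s) (hz : z ∈ s) :
    φ z ≤ φ x + ⟪gradient φ x, z - x⟫ + L / 2 * ‖z - x‖ ^ 2 := by
  have hseg : ∀ t ∈ Icc (0 : ℝ) 1, x + t • (z - x) ∈ s := fun t ht => hs.add_smul_sub_mem hx hz ht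
  have := taylor_upper_of_secondDeriv_le zero_le_one
    (fun t ht => (hφ _ (hseg t ht)).hasDerivAt_along_line.1)
    (fun t ht => (hφ _ (hseg t ht)).hasDerivAt_along_line.2) (fun t ht => hL _ (hseg t ht) (z - x))
  simp only [zero_smul, add_zero, one_smul, add_sub_cancel, sub_zero, mul_one, one_pow] at this
  linarith

end Gradient

section Conjugate

variable {d : ℕ} {s : Set (EuclideanSpace ℝ (Fin d))} {g : EuclideanSpace ℝ (Fin d) → ℝ}
  {x y p : EuclideanSpace ℝ (Fin d)}

lemma conjOn_le {c : ℝ} (hs : s.Nonempty) (h : ∀ z ∈ s, ⟪z, y⟫ - g z ≤ c) :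
    conjOn d s g y ≤ c :=
  csSup_le (hs.image _) (by rintro _ ⟨z, hz, rfl⟩; exact h z hz)

lemma le_conjOn (hs : IsCompact s) (hg : ContinuousOn g s) (hx : x ∈ s) :
    ⟪x, y⟫ - g x ≤ conjOn d s g y :=
  le_csSup ((hs.image_of_continuousOn
    ((continuous_id.inner continuous_const).continuousOn.sub hg)).bddAbove) (mem_image_of_mem _ hx)

lemma lipschitzWith_conjOn (hs : IsCompact s) (hg : ContinuousOn g s) (hne : s.Nonempty) {R : ℝ}
    (hR : ∀ x ∈ s, ‖x‖ ≤ R) : LipschitzWith R.toNNReal (conjOn d s g) := by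
  refine LipschitzWith.of_le_add_mul' R fun y₁ y₂ => conjOn_le hne fun z hz => ?_
  have hinner : ⟪z, y₁⟫ - ⟪z, y₂⟫ ≤ R * dist y₁ y₂ := by
    rw [← inner_sub_right, dist_eq_norm]
    exact (real_inner_le_norm _ _).trans
      (mul_le_mul_of_nonneg_right (hR z hz) (norm_nonneg _))
  linarith [le_conjOn (y := y₂) hs hg hz]

lemma continuous_conjOn (hs : IsCompact s) (hg : ContinuousOn g s) :
    Continuous (conjOn d s g) := by
  rcases s.eq_empty_or_nonempty with rfl | hne
  · exact (continuous_const (y := sSup (∅ : Set ℝ))).congr fun y => by simp [conjOn]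
  · obtain ⟨R, -, hR⟩ := hs.isBounded.exists_pos_norm_le
    exact (lipschitzWith_conjOn hs hg hne hR).continuous

lemma conjOn_le_add_sq_div {μ : ℝ} (hμ : 0 < μ) (hx : x ∈ s)
    (h : ∀ z ∈ s, g x + ⟪p, z - x⟫ + μ / 2 * ‖z - x‖ ^ 2 ≤ g z) :
    conjOn d s g y ≤ ⟪x, y⟫ - g x + ‖p - y‖ ^ 2 / (2 * μ) := by
  refine conjOn_le ⟨x, hx⟩ fun z hz => ?_
  have hsplit : ⟪z, y⟫ - ⟪p, z - x⟫ = ⟪x, y⟫ + ⟪z - x, y - p⟫ := by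
    simp only [inner_sub_left, inner_sub_right, real_inner_comm]; ring
  -- AM-GM: `a b ≤ b² / (2μ) + μ a² / 2`
  have hamgm : ⟪z - x, y - p⟫ ≤ ‖p - y‖ ^ 2 / (2 * μ) + μ / 2 * ‖z - x‖ ^ 2 := by
    have hcs := real_inner_le_norm (z - x) (y - p)
    rw [norm_sub_rev y p] at hcs
    have hsq : 0 ≤ (‖p - y‖ - μ * ‖z - x‖) ^ 2 / (2 * μ) := by positivity
    have hexp : (‖p - y‖ - μ * ‖z - x‖) ^ 2 / (2 * μ)
        = ‖p - y‖ ^ 2 / (2 * μ) + μ / 2 * ‖z - x‖ ^ 2 - ‖z - x‖ * ‖p - y‖ := by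
      field_simp; ring
    linarith
  linarith [h z hz]

lemma le_conjOn_add_sq (hs : IsCompact s) (hg : ContinuousOn g s) {L c : ℝ}
    (hc : x + c • (y - p) ∈ s)
    (h : g (x + c • (y - p)) ≤ g x + ⟪p, c • (y - p)⟫ + L / 2 * ‖c • (y - p)‖ ^ 2) :
    ⟪x, y⟫ - g x + (c - L / 2 * c ^ 2) * ‖p - y‖ ^ 2 ≤ conjOn d s g y := by
  have hnorm : ‖c • (y - p)‖ ^ 2 = c ^ 2 * ‖p - y‖ ^ 2 := by
    rw [norm_smul, mul_pow, Real.norm_eq_abs, sq_abs, norm_sub_rev]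
  have hinner : ⟪x + c • (y - p), y⟫ - ⟪p, c • (y - p)⟫ = ⟪x, y⟫ + c * ‖p - y‖ ^ 2 := by
    rw [real_inner_comm _ p, inner_add_left, add_sub_assoc, ← inner_sub_right, real_inner_smul_left,
      real_inner_self_eq_norm_sq, norm_sub_rev]
  rw [hnorm] at h
  linarith [le_conjOn (y := y) hs hg hc]

lemma conjOn_gap_bounds {f₀ f : EuclideanSpace ℝ (Fin d) → ℝ} {M : ℝ} (hM : 0 < M)
    (hs : IsCompact s) (hf₀ : ContinuousOn f₀ s) (hf : ContinuousOn f s) (hx : x ∈ s)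
    (hball : ∀ u, ‖u‖ ≤ 1 → x + u ∈ s) (hy : ‖y‖ ≤ M) (hp : ‖p‖ ≤ 2 * M)
    (h₀ : ∀ z ∈ s, f₀ x + ⟪y, z - x⟫ + M⁻¹ / 2 * ‖z - x‖ ^ 2 ≤ f₀ z)
    (hlo : ∀ z ∈ s, f x + ⟪p, z - x⟫ + (2 * M)⁻¹ / 2 * ‖z - x‖ ^ 2 ≤ f z)
    (hup : ∀ z ∈ s, f z ≤ f x + ⟪p, z - x⟫ + 2 * M / 2 * ‖z - x‖ ^ 2) :
    1 / (8 * M) * ‖p - y‖ ^ 2 ≤ f x - f₀ x + (conjOn d s f y - conjOn d s f₀ y) ∧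
      f x - f₀ x + (conjOn d s f y - conjOn d s f₀ y) ≤ 2 * M * ‖p - y‖ ^ 2 := by
  have hconj₀ : conjOn d s f₀ y = ⟪x, y⟫ - f₀ x := by
    refine le_antisymm ?_ (le_conjOn hs hf₀ hx)
    simpa using conjOn_le_add_sq_div (y := y) (inv_pos.2 hM) hx h₀
  have hupper : conjOn d s f y ≤ ⟪x, y⟫ - f x + M * ‖p - y‖ ^ 2 := by
    have := conjOn_le_add_sq_div (y := y) (by positivity) hx hlo
    rwa [show ‖p - y‖ ^ 2 / (2 * (2 * M)⁻¹) = M * ‖p - y‖ ^ 2 by field_simp] at this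
  have hlower : ⟪x, y⟫ - f x + 1 / (8 * M) * ‖p - y‖ ^ 2 ≤ conjOn d s f y := by
    have hc : x + (3 * M)⁻¹ • (y - p) ∈ s := by
      refine hball _ ?_
      rw [norm_smul, Real.norm_of_nonneg (by positivity), inv_mul_le_one₀ (by positivity)]
      linarith [norm_sub_le y p]
    have := le_conjOn_add_sq (L := 2 * M) hs hf hc
      (by simpa only [add_sub_cancel_left] using hup _ hc)
    have hcoef : 1 / (8 * M) ≤ (3 * M)⁻¹ - 2 * M / 2 * ((3 * M)⁻¹) ^ 2 := by
      rw [show (3 * M)⁻¹ - 2 * M / 2 * ((3 * M)⁻¹) ^ 2 = 2 / (9 * M) by field_simp; ring,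
        div_le_div_iff₀ (by positivity) (by positivity)]
      linarith
    nlinarith [sq_nonneg ‖p - y‖]
  constructor
  · linarith
  · nlinarith [sq_nonneg ‖p - y‖]

end Conjugate

section Integration

variable {X : Type*} [MeasurableSpace X] {μ : Measure X}

lemma ContinuousOn.integrable_of_ae_mem [TopologicalSpace X] [OpensMeasurableSpace X] [T2Space X]
    [IsFiniteMeasure μ] {F : Type*} [NormedAddCommGroup F] {f : X → F} {K : Set X}
    (hf : ContinuousOn f K) (hK : IsCompact K) (hμK : ∀ᵐ x ∂μ, x ∈ K) : Integrable f μ := by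
  rw [← Measure.restrict_eq_self_of_ae_mem hμK]
  exact hf.integrableOn_compact hK

lemma mul_integral_le_integral_and_le_mul_integral {h e : X → ℝ} {a b : ℝ}
    (hh : Integrable h μ) (he : Integrable e μ) (hbd : ∀ᵐ x ∂μ, a * h x ≤ e x ∧ e x ≤ b * h x) :
    a * ∫ x, h x ∂μ ≤ ∫ x, e x ∂μ ∧ ∫ x, e x ∂μ ≤ b * ∫ x, h x ∂μ := by
  rw [← integral_const_mul, ← integral_const_mul]
  exact ⟨integral_mono_ae (hh.const_mul a) he (hbd.mono fun _ => And.left),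
    integral_mono_ae he (hh.const_mul b) (hbd.mono fun _ => And.right)⟩

end Integration

lemma semiDual_sub_eq_integral {d : ℕ} {s : Set (EuclideanSpace ℝ (Fin d))}
    {P : Measure (EuclideanSpace ℝ (Fin d))}
    {T : EuclideanSpace ℝ (Fin d) → EuclideanSpace ℝ (Fin d)} {f₀ f : EuclideanSpace ℝ (Fin d) → ℝ}
    (hT : AEMeasurable T P) (hf₀ : Integrable f₀ P) (hf : Integrable f P)
    (hc₀ : AEStronglyMeasurable (conjOn d s f₀) (P.map T))
    (hc : AEStronglyMeasurable (conjOn d s f) (P.map T))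
    (hc₀T : Integrable (fun x => conjOn d s f₀ (T x)) P)
    (hcT : Integrable (fun x => conjOn d s f (T x)) P) :
    semiDual d s P (P.map T) f - semiDual d s P (P.map T) f₀
      = ∫ x, f x - f₀ x + (conjOn d s f (T x) - conjOn d s f₀ (T x)) ∂P := by
  rw [semiDual, semiDual, integral_map hT hc, integral_map hT hc₀,
    integral_add (f := fun x => f x - f₀ x)
      (g := fun x => conjOn d s f (T x) - conjOn d s f₀ (T x)) (hf.sub hf₀) (hcT.sub hc₀T),
    integral_sub hf hf₀, integral_sub hcT hc₀T]
  ring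

theorem semiDual_stability_general
    (d : ℕ) (M : ℝ) (hM : 2 ≤ M)
    (ΩP Ωt : Set (EuclideanSpace ℝ (Fin d)))
    (hPcomp : IsCompact ΩP)
    (htcomp : IsCompact Ωt) (htconv : Convex ℝ Ωt)
    (hincl : ∀ x ∈ ΩP, ∀ u : EuclideanSpace ℝ (Fin d), ‖u‖ ≤ 1 → x + u ∈ Ωt)
    (f₀ f : EuclideanSpace ℝ (Fin d) → ℝ)
    (hf₀smooth : ∃ V, IsOpen V ∧ Ωt ⊆ V ∧ ContDiffOn ℝ 2 f₀ V)
    (hfsmooth : ∃ V, IsOpen V ∧ Ωt ⊆ V ∧ ContDiffOn ℝ 2 f V)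
    (hf₀grad : ∀ x ∈ Ωt, ‖gradient f₀ x‖ ≤ M)
    (hf₀hess : ∀ x ∈ Ωt, ∀ v : EuclideanSpace ℝ (Fin d),
      M⁻¹ * ‖v‖ ^ 2 ≤ ⟪fderiv ℝ (gradient f₀) x v, v⟫ ∧
      ⟪fderiv ℝ (gradient f₀) x v, v⟫ ≤ M * ‖v‖ ^ 2)
    (hfgrad : ∀ x ∈ Ωt, ‖gradient f x‖ ≤ 2 * M)
    (hfhess : ∀ x ∈ Ωt, ∀ v : EuclideanSpace ℝ (Fin d),
      (2 * M)⁻¹ * ‖v‖ ^ 2 ≤ ⟪fderiv ℝ (gradient f) x v, v⟫ ∧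
      ⟪fderiv ℝ (gradient f) x v, v⟫ ≤ 2 * M * ‖v‖ ^ 2)
    (P : Measure (EuclideanSpace ℝ (Fin d))) [IsProbabilityMeasure P]
    (hPsupp : P ΩPᶜ = 0) :
    1 / (8 * M) * ∫ x, ‖gradient f x - gradient f₀ x‖ ^ 2 ∂P
      ≤ semiDual d Ωt P (P.map (gradient f₀)) f
        - semiDual d Ωt P (P.map (gradient f₀)) f₀ ∧
    semiDual d Ωt P (P.map (gradient f₀)) f
        - semiDual d Ωt P (P.map (gradient f₀)) f₀
      ≤ 2 * M * ∫ x, ‖gradient f x - gradient f₀ x‖ ^ 2 ∂P := by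
  obtain ⟨V₀, hV₀, hΩV₀, hf₀V⟩ := hf₀smooth
  obtain ⟨V, hV, hΩV, hfV⟩ := hfsmooth
  have hf₀C2 : ∀ w ∈ Ωt, ContDiffAt ℝ 2 f₀ w := fun w hw => hf₀V.contDiffAt (hV₀.mem_nhds (hΩV₀ hw))
  have hfC2 : ∀ w ∈ Ωt, ContDiffAt ℝ 2 f w := fun w hw => hfV.contDiffAt (hV.mem_nhds (hΩV hw))
  have hf₀c := hf₀V.continuousOn.mono hΩV₀
  have hfc := hfV.continuousOn.mono hΩV
  have hg₀c := continuousOn_gradient_of_contDiffAt hf₀C2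
  have hgc := continuousOn_gradient_of_contDiffAt hfC2
  have hPt : ΩP ⊆ Ωt := fun x hx => by simpa using hincl x hx 0 (by simp)
  have hae : ∀ᵐ x ∂P, x ∈ ΩP := ae_iff.2 hPsupp
  have hint {h : EuclideanSpace ℝ (Fin d) → ℝ} (hh : ContinuousOn h ΩP) : Integrable h P :=
    hh.integrable_of_ae_mem hPcomp hae
  have hconj₀ := continuous_conjOn htcomp hf₀c
  have hconj := continuous_conjOn htcomp hfc
  have hconj₀T := hconj₀.comp_continuousOn (hg₀c.mono hPt)
  have hconjT := hconj.comp_continuousOn (hg₀c.mono hPt)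
  rw [semiDual_sub_eq_integral (measurable_gradient f₀).aemeasurable (hint (hf₀c.mono hPt))
    (hint (hfc.mono hPt)) hconj₀.aestronglyMeasurable hconj.aestronglyMeasurable
    (hint hconj₀T) (hint hconjT)]
  refine mul_integral_le_integral_and_le_mul_integral
    (hint (((hgc.sub hg₀c).norm.pow 2).mono hPt))
    (hint (((hfc.sub hf₀c).mono hPt).add (hconjT.sub hconj₀T))) (hae.mono fun x hx => ?_)
  have hxt := hPt hx
  exact conjOn_gap_bounds (by linarith) htcomp hf₀c hfc hxt (hincl x hx) (hf₀grad x hxt)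
    (hfgrad x hxt)
    (fun _ => htconv.taylor_lower_of_le_hessian hf₀C2 (fun w hw v => (hf₀hess w hw v).1) hxt)
    (fun _ => htconv.taylor_lower_of_le_hessian hfC2 (fun w hw v => (hfhess w hw v).1) hxt)
    (fun _ => htconv.taylor_upper_of_hessian_le hfC2 (fun w hw v => (hfhess w hw v).2) hxt)

/-- **Stability of the semi-dual objective (two-sided bound in `L²(P)`).** Under the stability
setup (Ω_P nonempty compact, Ω̃ compact convex ⊆ B̄(0, M) with Ω_P + B̄(0,1) ⊆ Ω̃; `f₀`, `f`
twice continuously differentiable on an open set containing Ω̃, with `‖∇f₀‖ ≤ M`,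
`M⁻¹ ≼ D²f₀ ≼ M`, `‖∇f‖ ≤ 2M`, `(2M)⁻¹ ≼ D²f ≼ 2M` on Ω̃; `P` a probability measure
supported in Ω_P and `Q = (∇f₀)_# P`), one has
`(1/(8M))·∫‖∇f − ∇f₀‖² dP ≤ S(f) − S(f₀) ≤ 2M·∫‖∇f − ∇f₀‖² dP`. -/
theorem semiDual_stability
    (d : ℕ) (hd : 1 ≤ d) (M : ℝ) (hM : 2 ≤ M)
    (ΩP Ωt : Set (EuclideanSpace ℝ (Fin d)))
    (hPne : ΩP.Nonempty) (hPcomp : IsCompact ΩP)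
    (htcomp : IsCompact Ωt) (htconv : Convex ℝ Ωt)
    (htball : Ωt ⊆ Metric.closedBall 0 M)
    (hincl : ∀ x ∈ ΩP, ∀ u : EuclideanSpace ℝ (Fin d), ‖u‖ ≤ 1 → x + u ∈ Ωt)
    (f₀ f : EuclideanSpace ℝ (Fin d) → ℝ)
    (hf₀smooth : ∃ V, IsOpen V ∧ Ωt ⊆ V ∧ ContDiffOn ℝ 2 f₀ V)
    (hfsmooth : ∃ V, IsOpen V ∧ Ωt ⊆ V ∧ ContDiffOn ℝ 2 f V)
    (hf₀grad : ∀ x ∈ Ωt, ‖gradient f₀ x‖ ≤ M)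
    (hf₀hess : ∀ x ∈ Ωt, ∀ v : EuclideanSpace ℝ (Fin d),
      M⁻¹ * ‖v‖ ^ 2 ≤ ⟪fderiv ℝ (gradient f₀) x v, v⟫ ∧
      ⟪fderiv ℝ (gradient f₀) x v, v⟫ ≤ M * ‖v‖ ^ 2)
    (hfgrad : ∀ x ∈ Ωt, ‖gradient f x‖ ≤ 2 * M)
    (hfhess : ∀ x ∈ Ωt, ∀ v : EuclideanSpace ℝ (Fin d),
      (2 * M)⁻¹ * ‖v‖ ^ 2 ≤ ⟪fderiv ℝ (gradient f) x v, v⟫ ∧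
      ⟪fderiv ℝ (gradient f) x v, v⟫ ≤ 2 * M * ‖v‖ ^ 2)
    (P : Measure (EuclideanSpace ℝ (Fin d))) [IsProbabilityMeasure P]
    (hPsupp : P ΩPᶜ = 0) :
    1 / (8 * M) * ∫ x, ‖gradient f x - gradient f₀ x‖ ^ 2 ∂P
      ≤ semiDual d Ωt P (P.map (gradient f₀)) f
        - semiDual d Ωt P (P.map (gradient f₀)) f₀ ∧
    semiDual d Ωt P (P.map (gradient f₀)) f
        - semiDual d Ωt P (P.map (gradient f₀)) f₀
      ≤ 2 * M * ∫ x, ‖gradient f x - gradient f₀ x‖ ^ 2 ∂P :=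
  semiDual_stability_general d M hM ΩP Ωt hPcomp htcomp htconv hincl f₀ f hf₀smooth hfsmooth hf₀grad
    hf₀hess hfgrad hfhess P hPsupp
end

section
/- Under the stability setup, the conjugates f* and f₀* are differentiable on all of ℝ^d and the semi-dual suboptimality gap controls the squared L²(Q)-distance between their gradients: (1/(4M)) · ∫ ‖∇f*(y) − ∇f₀*(y)‖₂² dQ(y) ≤ S(f) − S(f₀). -/
/-!
A Hessian bound `D²g ≥ α > 0` on the convex set `Ωt` gives the first-order inequality
`g b ≥ g a + ⟪∇g a, b - a⟫ + α/2 ‖b - a‖²`. Combined with the variational inequality at a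
maximiser `z` of `x ↦ ⟪x, y⟫ - g x` over `Ωt`, it yields quadratic growth: the objective drops by
at least `α/2 ‖w - z‖²` at any `w ∈ Ωt`. Hence maximisers move `α⁻¹`-Lipschitzly in `y`, the
conjugate is differentiable with `∇g* y = z`, and the Fenchel–Young gap `g x + g* y - ⟪x, y⟫`
dominates `α/2 ‖∇g* y - x‖²`. For `x ∈ ΩP` and `y = ∇f₀ x`, the point `x` itself maximises
`⟪·, y⟫ - f₀`, so `∇f₀* y = x` and `f₀ x + f₀* y = ⟪x, y⟫`. The integrand of `S(f) - S(f₀)` at `x`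
is therefore the Fenchel–Young gap of `f`, and `α = (2M)⁻¹` gives the constant `1/(4M)`.
-/

open MeasureTheory Set RealInnerProductSpace InnerProductSpace

lemma add_deriv_add_half_le_of_le_deriv2 {φ φ' φ'' : ℝ → ℝ} {c : ℝ}
    (hφ : ∀ t ∈ Icc (0 : ℝ) 1, HasDerivAt φ (φ' t) t)
    (hφ' : ∀ t ∈ Ioo (0 : ℝ) 1, HasDerivAt φ' (φ'' t) t)
    (hc : ∀ t ∈ Ioo (0 : ℝ) 1, c ≤ φ'' t) :
    φ 0 + φ' 0 + c / 2 ≤ φ 1 := by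
  have hψ : ∀ t ∈ Icc (0 : ℝ) 1,
      HasDerivAt (fun s => φ s - c / 2 * s ^ 2) (φ' t - c * t) t := fun t ht =>
    ((hφ t ht).sub ((hasDerivAt_pow 2 t).const_mul (c / 2))).congr_deriv (by norm_num; ring)
  have hconvex : ConvexOn ℝ (Icc 0 1) (fun s => φ s - c / 2 * s ^ 2) := by
    refine convexOn_of_hasDerivWithinAt2_nonneg (convex_Icc 0 1)
      (fun t ht => (hψ t ht).continuousAt.continuousWithinAt) (f' := fun t => φ' t - c * t)
      (f'' := fun t => φ'' t - c) ?_ ?_ ?_ <;> rw [interior_Icc]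
    · exact fun t ht => (hψ t (Ioo_subset_Icc_self ht)).hasDerivWithinAt
    · exact fun t ht => (((hφ' t ht).sub ((hasDerivAt_id t).const_mul c)).congr_deriv
        (by simp)).hasDerivWithinAt
    · exact fun t ht => sub_nonneg.2 (hc t ht)
  have hslope := hconvex.le_slope_of_hasDerivAt (left_mem_Icc.2 zero_le_one)
    (right_mem_Icc.2 zero_le_one) zero_lt_one (hψ 0 (left_mem_Icc.2 zero_le_one))
  simp only [slope_def_field, mul_zero, sub_zero, one_pow, mul_one, ne_eq, OfNat.ofNat_ne_zero,
    not_false_eq_true, zero_pow, div_one] at hslope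
  linarith

lemma HasFDerivAt.hasDerivAt_comp_add_smul {E F : Type*} [NormedAddCommGroup E] [NormedSpace ℝ E]
    [NormedAddCommGroup F] [NormedSpace ℝ F] {h : E → F} {h' : E →L[ℝ] F} {a u : E} {t : ℝ}
    (hh : HasFDerivAt h h' (a + t • u)) : HasDerivAt (fun s : ℝ => h (a + s • u)) (h' u) t :=
  hh.comp_hasDerivAt t (by simpa using ((hasDerivAt_id t).smul_const u).const_add a)

@[fun_prop]
lemma measurable_gradient_s3 {F : Type*} [NormedAddCommGroup F] [InnerProductSpace ℝ F]
    [FiniteDimensional ℝ F] [MeasurableSpace F] [BorelSpace F] (g : F → ℝ) :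
    Measurable (gradient g) :=
  (toDual ℝ F).symm.continuous.measurable.comp (measurable_fderiv ℝ g)

section Conjugate

variable {E : Type*} [NormedAddCommGroup E] [InnerProductSpace ℝ E] {g : E → ℝ} {Ω : Set E}

/-- For `E = EuclideanSpace ℝ (Fin d)` this is definitionally `conjOn d Ω g`. -/
noncomputable def conjugateOn (Ω : Set E) (g : E → ℝ) (y : E) : ℝ :=
  sSup ((fun x => ⟪x, y⟫ - g x) '' Ω)

lemma conjugateOn_eq_of_isMaxOn {y z : E} (hz : z ∈ Ω)
    (hmax : IsMaxOn (fun x => ⟪x, y⟫ - g x) Ω z) : conjugateOn Ω g y = ⟪z, y⟫ - g z :=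
  IsGreatest.csSup_eq ⟨mem_image_of_mem _ hz, forall_mem_image.2 hmax⟩

lemma exists_isMaxOn_inner_sub (hΩ : IsCompact Ω) (hne : Ω.Nonempty) (hg : ContinuousOn g Ω)
    (y : E) : ∃ z ∈ Ω, IsMaxOn (fun x => ⟪x, y⟫ - g x) Ω z :=
  hΩ.exists_isMaxOn hne <| (continuous_id.inner continuous_const).continuousOn.sub hg

variable [CompleteSpace E] {α : ℝ}

def FirstOrderStrongConvexOn (Ω : Set E) (α : ℝ) (g : E → ℝ) : Prop :=
  ∀ a ∈ Ω, ∀ b ∈ Ω, g a + ⟪gradient g a, b - a⟫ + α / 2 * ‖b - a‖ ^ 2 ≤ g b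

lemma ContDiffOn.differentiableAt_gradient {V : Set E} (hg : ContDiffOn ℝ 2 g V) (hV : IsOpen V)
    {x : E} (hx : x ∈ V) : DifferentiableAt ℝ (gradient g) x :=
  (toDual ℝ E).symm.differentiableAt.comp x
    (((hg.contDiffAt (hV.mem_nhds hx)).fderiv_right le_rfl).differentiableAt one_ne_zero)

lemma firstOrderStrongConvexOn_of_hessian_ge (hconv : Convex ℝ Ω)
    (hg : ∀ x ∈ Ω, DifferentiableAt ℝ g x) (hg' : ∀ x ∈ Ω, DifferentiableAt ℝ (gradient g) x)
    (hhess : ∀ x ∈ Ω, ∀ v : E, α * ‖v‖ ^ 2 ≤ ⟪fderiv ℝ (gradient g) x v, v⟫) :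
    FirstOrderStrongConvexOn Ω α g := by
  intro a ha b hb
  have hseg : ∀ t ∈ Icc (0 : ℝ) 1, a + t • (b - a) ∈ Ω := fun t ht =>
    hconv.add_smul_sub_mem ha hb ht
  have := add_deriv_add_half_le_of_le_deriv2 (φ := fun t => g (a + t • (b - a)))
    (φ' := fun t => ⟪gradient g (a + t • (b - a)), b - a⟫)
    (φ'' := fun t => ⟪fderiv ℝ (gradient g) (a + t • (b - a)) (b - a), b - a⟫)
    (fun t ht => (hg _ (hseg t ht)).hasFDerivAt.hasDerivAt_comp_add_smul.congr_deriv
      inner_gradient_left.symm)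
    (fun t ht => ((hg' _ (hseg t (Ioo_subset_Icc_self ht))).hasFDerivAt.hasDerivAt_comp_add_smul
      |>.inner ℝ (hasDerivAt_const t _)).congr_deriv (by simp))
    (fun t ht => hhess _ (hseg t (Ioo_subset_Icc_self ht)) _)
  simp only [zero_smul, add_zero, one_smul, add_sub_cancel] at this
  linarith

lemma IsMaxOn.inner_sub_gradient_nonpos (hconv : Convex ℝ Ω) {y z : E} (hz : z ∈ Ω)
    (hgz : DifferentiableAt ℝ g z) (hmax : IsMaxOn (fun x => ⟪x, y⟫ - g x) Ω z)
    {w : E} (hw : w ∈ Ω) : ⟪y - gradient g z, w - z⟫ ≤ 0 := by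
  have hF : (fun x => ⟪x, y⟫ - g x) = ⇑(innerSL ℝ y) - g := by
    ext x
    simp [real_inner_comm]
  rw [hF] at hmax
  have := hmax.localize.hasFDerivWithinAt_nonpos
    ((innerSL ℝ y).hasFDerivAt.sub hgz.hasFDerivAt).hasFDerivWithinAt
    (sub_mem_posTangentConeAt_of_segment_subset (hconv.segment_subset hz hw))
  simpa [inner_sub_left, inner_gradient_left] using this

lemma IsMaxOn.add_sq_le (hconv : Convex ℝ Ω)
    (hsc : FirstOrderStrongConvexOn Ω α g)
    {y z : E} (hz : z ∈ Ω) (hgz : DifferentiableAt ℝ g z)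
    (hmax : IsMaxOn (fun x => ⟪x, y⟫ - g x) Ω z) {w : E} (hw : w ∈ Ω) :
    ⟪w, y⟫ - g w + α / 2 * ‖w - z‖ ^ 2 ≤ ⟪z, y⟫ - g z := by
  have hvi := hmax.inner_sub_gradient_nonpos hconv hz hgz hw
  have := hsc z hz w hw
  rw [inner_sub_left, inner_sub_right, inner_sub_right, real_inner_comm w y,
    real_inner_comm z y] at hvi
  rw [inner_sub_right] at this
  linarith

lemma IsMaxOn.norm_sub_le (hconv : Convex ℝ Ω) (hα : 0 < α)
    (hg : ∀ x ∈ Ω, DifferentiableAt ℝ g x)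
    (hsc : FirstOrderStrongConvexOn Ω α g)
    {y₁ y₂ z₁ z₂ : E} (hz₁ : z₁ ∈ Ω) (hmax₁ : IsMaxOn (fun x => ⟪x, y₁⟫ - g x) Ω z₁)
    (hz₂ : z₂ ∈ Ω) (hmax₂ : IsMaxOn (fun x => ⟪x, y₂⟫ - g x) Ω z₂) :
    ‖z₂ - z₁‖ ≤ α⁻¹ * ‖y₂ - y₁‖ := by
  have h₁ := hmax₁.add_sq_le hconv hsc hz₁ (hg z₁ hz₁) hz₂
  have h₂ := hmax₂.add_sq_le hconv hsc hz₂ (hg z₂ hz₂) hz₁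
  have hmono : α * ‖z₂ - z₁‖ ^ 2 ≤ ‖z₂ - z₁‖ * ‖y₂ - y₁‖ := by
    have := real_inner_le_norm (z₂ - z₁) (y₂ - y₁)
    rw [norm_sub_rev z₁] at h₂
    simp only [inner_sub_left, inner_sub_right] at this
    linarith
  rw [inv_mul_eq_div, le_div_iff₀ hα]
  rcases (norm_nonneg (z₂ - z₁)).eq_or_lt with h0 | h0
  · rw [← h0, zero_mul]; positivity
  · nlinarith

lemma hasGradientAt_conjugateOn (hΩ : IsCompact Ω) (hconv : Convex ℝ Ω) (hα : 0 < α)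
    (hg : ∀ x ∈ Ω, DifferentiableAt ℝ g x)
    (hsc : FirstOrderStrongConvexOn Ω α g)
    {y z : E} (hz : z ∈ Ω) (hmax : IsMaxOn (fun x => ⟪x, y⟫ - g x) Ω z) :
    HasGradientAt (conjugateOn Ω g) z y := by
  have hremainder : ∀ h : E,
      |conjugateOn Ω g (y + h) - conjugateOn Ω g y - ⟪z, h⟫| ≤ α⁻¹ * ‖h‖ ^ 2 := by
    intro h
    obtain ⟨z', hz', hmax'⟩ := exists_isMaxOn_inner_sub hΩ ⟨z, hz⟩
      (continuousOn_of_forall_continuousAt fun x hx => (hg x hx).continuousAt) (y + h)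
    rw [conjugateOn_eq_of_isMaxOn hz hmax, conjugateOn_eq_of_isMaxOn hz' hmax']
    have hlower : ⟪z, y + h⟫ - g z ≤ ⟪z', y + h⟫ - g z' := hmax' hz
    have hupper : ⟪z', y⟫ - g z' ≤ ⟪z, y⟫ - g z := hmax hz'
    have hlip : ⟪z' - z, h⟫ ≤ α⁻¹ * ‖h‖ ^ 2 := calc
      ⟪z' - z, h⟫ ≤ ‖z' - z‖ * ‖h‖ := real_inner_le_norm _ _
      _ ≤ α⁻¹ * ‖y + h - y‖ * ‖h‖ := by
        gcongr; exact hmax.norm_sub_le hconv hα hg hsc hz hz' hmax'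
      _ = α⁻¹ * ‖h‖ ^ 2 := by rw [add_sub_cancel_left]; ring
    simp only [inner_add_right, inner_sub_left] at hlower hlip ⊢
    rw [abs_le]
    constructor <;> linarith
  rw [hasGradientAt_iff_hasFDerivAt, hasFDerivAt_iff_isLittleO_nhds_zero]
  refine Asymptotics.IsBigO.trans_isLittleO ?_ (Asymptotics.isLittleO_norm_pow_id one_lt_two)
  refine Asymptotics.IsBigO.of_bound α⁻¹ (Filter.Eventually.of_forall fun h => ?_)
  simpa [toDual_apply_apply] using hremainder h

lemma differentiable_conjugateOn (hΩ : IsCompact Ω) (hne : Ω.Nonempty) (hconv : Convex ℝ Ω)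
    (hα : 0 < α) (hg : ∀ x ∈ Ω, DifferentiableAt ℝ g x)
    (hsc : FirstOrderStrongConvexOn Ω α g) :
    Differentiable ℝ (conjugateOn Ω g) := fun y =>
  let ⟨_, hz, hmax⟩ := exists_isMaxOn_inner_sub hΩ hne
    (continuousOn_of_forall_continuousAt fun x hx => (hg x hx).continuousAt) y
  (hasGradientAt_conjugateOn hΩ hconv hα hg hsc hz hmax).differentiableAt

lemma isMaxOn_inner_gradient_sub (hα : 0 ≤ α)
    (hsc : FirstOrderStrongConvexOn Ω α g)
    {x : E} (hx : x ∈ Ω) : IsMaxOn (fun w => ⟪w, gradient g x⟫ - g w) Ω x := fun w hw => by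
  have hw' := hsc x hx w hw
  rw [inner_sub_right, real_inner_comm w, real_inner_comm x] at hw'
  have hquad : 0 ≤ α / 2 * ‖w - x‖ ^ 2 := by positivity
  simp only [mem_ofPred_eq]
  linarith

lemma half_mul_sq_norm_gradient_conjugateOn_sub_le (hΩ : IsCompact Ω) (hconv : Convex ℝ Ω)
    (hα : 0 < α) (hg : ∀ x ∈ Ω, DifferentiableAt ℝ g x)
    (hsc : FirstOrderStrongConvexOn Ω α g)
    {α₀ : ℝ} {g₀ : E → ℝ} (hα₀ : 0 < α₀) (hg₀ : ∀ x ∈ Ω, DifferentiableAt ℝ g₀ x)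
    (hsc₀ : FirstOrderStrongConvexOn Ω α₀ g₀)
    {x : E} (hx : x ∈ Ω) :
    α / 2 * ‖gradient (conjugateOn Ω g) (gradient g₀ x)
        - gradient (conjugateOn Ω g₀) (gradient g₀ x)‖ ^ 2
      ≤ g x - g₀ x + (conjugateOn Ω g (gradient g₀ x) - conjugateOn Ω g₀ (gradient g₀ x)) := by
  set y := gradient g₀ x
  obtain ⟨z, hz, hmax⟩ := exists_isMaxOn_inner_sub hΩ ⟨x, hx⟩
    (continuousOn_of_forall_continuousAt fun x hx => (hg x hx).continuousAt) y
  have hmax₀ : IsMaxOn (fun w => ⟪w, y⟫ - g₀ w) Ω x := isMaxOn_inner_gradient_sub hα₀.le hsc₀ hx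
  rw [(hasGradientAt_conjugateOn hΩ hconv hα hg hsc hz hmax).gradient,
    (hasGradientAt_conjugateOn hΩ hconv hα₀ hg₀ hsc₀ hx hmax₀).gradient,
    conjugateOn_eq_of_isMaxOn hz hmax, conjugateOn_eq_of_isMaxOn hx hmax₀, norm_sub_rev]
  linarith [hmax.add_sq_le hconv hsc hz (hg z hz) hx]

end Conjugate

section SemiDual

lemma ContinuousOn.integrable_of_measure_compl_eq_zero {X : Type*} [TopologicalSpace X]
    [T2Space X] [MeasurableSpace X] [OpensMeasurableSpace X] {μ : Measure X} [IsFiniteMeasure μ]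
    {K : Set X} {h : X → ℝ} (hK : IsCompact K) (hμK : μ Kᶜ = 0) (hh : ContinuousOn h K) :
    Integrable h μ := by
  rw [← Measure.restrict_eq_self_of_ae_mem (mem_ae_iff.2 hμK)]
  exact hh.integrableOn_compact hK

variable {d : ℕ} {Ω K : Set (EuclideanSpace ℝ (Fin d))} {P : Measure (EuclideanSpace ℝ (Fin d))}
  [IsFiniteMeasure P] {T : EuclideanSpace ℝ (Fin d) → EuclideanSpace ℝ (Fin d)}
  {g₁ g₂ G : EuclideanSpace ℝ (Fin d) → ℝ}

lemma integral_map_le_semiDual_sub (hK : IsCompact K) (hPK : P Kᶜ = 0) (hT : ContinuousOn T K)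
    (hg₁ : ContinuousOn g₁ K) (hg₂ : ContinuousOn g₂ K)
    (hc₁ : Continuous (conjOn d Ω g₁)) (hc₂ : Continuous (conjOn d Ω g₂))
    (hG : Measurable G) (hG₀ : 0 ≤ G)
    (hle : ∀ x ∈ K, G (T x) ≤ g₁ x - g₂ x + (conjOn d Ω g₁ (T x) - conjOn d Ω g₂ (T x))) :
    ∫ y, G y ∂(P.map T) ≤ semiDual d Ω P (P.map T) g₁ - semiDual d Ω P (P.map T) g₂ := by
  have hPae : ∀ᵐ x ∂P, x ∈ K := mem_ae_iff.2 hPK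
  have hTm : AEMeasurable T P := by
    rw [← Measure.restrict_eq_self_of_ae_mem hPae]
    exact hT.aemeasurable hK.measurableSet
  have hint : ∀ {h}, ContinuousOn h K → Integrable h P := fun hh =>
    hh.integrable_of_measure_compl_eq_zero hK hPK
  have hI₁ := hint hg₁
  have hI₂ := hint hg₂
  have hIc₁ : Integrable (fun x => conjOn d Ω g₁ (T x)) P := hint (hc₁.comp_continuousOn hT)
  have hIc₂ : Integrable (fun x => conjOn d Ω g₂ (T x)) P := hint (hc₂.comp_continuousOn hT)
  have hgap : semiDual d Ω P (P.map T) g₁ - semiDual d Ω P (P.map T) g₂ =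
      ∫ x, (g₁ x - g₂ x + (conjOn d Ω g₁ (T x) - conjOn d Ω g₂ (T x))) ∂P := by
    rw [semiDual, semiDual, integral_map hTm hc₁.aestronglyMeasurable,
      integral_map hTm hc₂.aestronglyMeasurable, integral_add (hI₁.sub hI₂) (hIc₁.sub hIc₂)
        (f := fun x => g₁ x - g₂ x) (g := fun x => conjOn d Ω g₁ (T x) - conjOn d Ω g₂ (T x)),
      integral_sub hI₁ hI₂, integral_sub hIc₁ hIc₂]
    ring
  rw [hgap, integral_map hTm hG.aestronglyMeasurable]
  exact integral_mono_of_nonneg (Filter.Eventually.of_forall fun x => hG₀ (T x))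
    ((hI₁.sub hI₂).add (hIc₁.sub hIc₂)) (hPae.mono hle)

end SemiDual

theorem semiDual_stability_conjugate_general
    (d : ℕ) (M : ℝ) (hM : 2 ≤ M)
    (ΩP Ωt : Set (EuclideanSpace ℝ (Fin d)))
    (hPne : ΩP.Nonempty) (hPcomp : IsCompact ΩP)
    (htcomp : IsCompact Ωt) (htconv : Convex ℝ Ωt)
    (hincl : ∀ x ∈ ΩP, ∀ u : EuclideanSpace ℝ (Fin d), ‖u‖ ≤ 1 → x + u ∈ Ωt)
    (f₀ f : EuclideanSpace ℝ (Fin d) → ℝ)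
    (hf₀smooth : ∃ V, IsOpen V ∧ Ωt ⊆ V ∧ ContDiffOn ℝ 2 f₀ V)
    (hfsmooth : ∃ V, IsOpen V ∧ Ωt ⊆ V ∧ ContDiffOn ℝ 2 f V)
    (hf₀hess : ∀ x ∈ Ωt, ∀ v : EuclideanSpace ℝ (Fin d),
      M⁻¹ * ‖v‖ ^ 2 ≤ ⟪fderiv ℝ (gradient f₀) x v, v⟫ ∧
      ⟪fderiv ℝ (gradient f₀) x v, v⟫ ≤ M * ‖v‖ ^ 2)
    (hfhess : ∀ x ∈ Ωt, ∀ v : EuclideanSpace ℝ (Fin d),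
      (2 * M)⁻¹ * ‖v‖ ^ 2 ≤ ⟪fderiv ℝ (gradient f) x v, v⟫ ∧
      ⟪fderiv ℝ (gradient f) x v, v⟫ ≤ 2 * M * ‖v‖ ^ 2)
    (P : Measure (EuclideanSpace ℝ (Fin d))) [IsProbabilityMeasure P]
    (hPsupp : P ΩPᶜ = 0) :
    (∀ y : EuclideanSpace ℝ (Fin d), DifferentiableAt ℝ (conjOn d Ωt f) y) ∧
    (∀ y : EuclideanSpace ℝ (Fin d), DifferentiableAt ℝ (conjOn d Ωt f₀) y) ∧
    1 / (4 * M) *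
        ∫ y, ‖gradient (conjOn d Ωt f) y - gradient (conjOn d Ωt f₀) y‖ ^ 2
          ∂(P.map (gradient f₀))
      ≤ semiDual d Ωt P (P.map (gradient f₀)) f
        - semiDual d Ωt P (P.map (gradient f₀)) f₀ := by
  obtain ⟨V, hV, hΩV, hfV⟩ := hfsmooth
  obtain ⟨V₀, hV₀, hΩV₀, hf₀V⟩ := hf₀smooth
  have hα : 0 < (2 * M)⁻¹ := by positivity
  have hα₀ : 0 < M⁻¹ := by positivity
  have hPt : ΩP ⊆ Ωt := fun x hx => by simpa using hincl x hx 0 (by simp)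
  have hfd : ∀ x ∈ Ωt, DifferentiableAt ℝ f x := fun x hx =>
    (hfV.differentiableOn two_ne_zero).differentiableAt (hV.mem_nhds (hΩV hx))
  have hf₀d : ∀ x ∈ Ωt, DifferentiableAt ℝ f₀ x := fun x hx =>
    (hf₀V.differentiableOn two_ne_zero).differentiableAt (hV₀.mem_nhds (hΩV₀ hx))
  have hfsc := firstOrderStrongConvexOn_of_hessian_ge htconv hfd
    (fun x hx => hfV.differentiableAt_gradient hV (hΩV hx)) (fun x hx v => (hfhess x hx v).1)
  have hf₀sc := firstOrderStrongConvexOn_of_hessian_ge htconv hf₀d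
    (fun x hx => hf₀V.differentiableAt_gradient hV₀ (hΩV₀ hx)) (fun x hx v => (hf₀hess x hx v).1)
  have hdiff := differentiable_conjugateOn htcomp (hPne.mono hPt) htconv hα hfd hfsc
  have hdiff₀ := differentiable_conjugateOn htcomp (hPne.mono hPt) htconv hα₀ hf₀d hf₀sc
  refine ⟨hdiff, hdiff₀, ?_⟩
  have hgrad₀ : ContinuousOn (gradient f₀) ΩP := fun x hx =>
    (hf₀V.differentiableAt_gradient hV₀ (hΩV₀ (hPt hx))).continuousAt.continuousWithinAt
  have hquarter : 1 / (4 * M) = (2 * M)⁻¹ / 2 := by field_simp; ring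
  rw [← integral_const_mul]
  refine integral_map_le_semiDual_sub hPcomp hPsupp hgrad₀ (hfV.continuousOn.mono (hPt.trans hΩV))
    (hf₀V.continuousOn.mono (hPt.trans hΩV₀)) hdiff.continuous hdiff₀.continuous (by fun_prop)
    (fun y => by positivity) fun x hx => ?_
  rw [hquarter]
  exact half_mul_sq_norm_gradient_conjugateOn_sub_le htcomp htconv hα hfd hfsc hα₀ hf₀d hf₀sc
    (hPt hx)

/-- **Stability of the semi-dual objective on the conjugate side.** Under the stability setup
(see below), the conjugates `f*` and `f₀*` are differentiable on all of `ℝ^d` and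
`(1/(4M))·∫‖∇f* − ∇f₀*‖² dQ ≤ S(f) − S(f₀)` where `Q = (∇f₀)_# P`. -/
theorem semiDual_stability_conjugate
    (d : ℕ) (hd : 1 ≤ d) (M : ℝ) (hM : 2 ≤ M)
    (ΩP Ωt : Set (EuclideanSpace ℝ (Fin d)))
    (hPne : ΩP.Nonempty) (hPcomp : IsCompact ΩP)
    (htcomp : IsCompact Ωt) (htconv : Convex ℝ Ωt)
    (htball : Ωt ⊆ Metric.closedBall 0 M)
    (hincl : ∀ x ∈ ΩP, ∀ u : EuclideanSpace ℝ (Fin d), ‖u‖ ≤ 1 → x + u ∈ Ωt)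
    (f₀ f : EuclideanSpace ℝ (Fin d) → ℝ)
    (hf₀smooth : ∃ V, IsOpen V ∧ Ωt ⊆ V ∧ ContDiffOn ℝ 2 f₀ V)
    (hfsmooth : ∃ V, IsOpen V ∧ Ωt ⊆ V ∧ ContDiffOn ℝ 2 f V)
    (hf₀grad : ∀ x ∈ Ωt, ‖gradient f₀ x‖ ≤ M)
    (hf₀hess : ∀ x ∈ Ωt, ∀ v : EuclideanSpace ℝ (Fin d),
      M⁻¹ * ‖v‖ ^ 2 ≤ ⟪fderiv ℝ (gradient f₀) x v, v⟫ ∧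
      ⟪fderiv ℝ (gradient f₀) x v, v⟫ ≤ M * ‖v‖ ^ 2)
    (hfgrad : ∀ x ∈ Ωt, ‖gradient f x‖ ≤ 2 * M)
    (hfhess : ∀ x ∈ Ωt, ∀ v : EuclideanSpace ℝ (Fin d),
      (2 * M)⁻¹ * ‖v‖ ^ 2 ≤ ⟪fderiv ℝ (gradient f) x v, v⟫ ∧
      ⟪fderiv ℝ (gradient f) x v, v⟫ ≤ 2 * M * ‖v‖ ^ 2)
    (P : Measure (EuclideanSpace ℝ (Fin d))) [IsProbabilityMeasure P]
    (hPsupp : P ΩPᶜ = 0) :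
    (∀ y : EuclideanSpace ℝ (Fin d), DifferentiableAt ℝ (conjOn d Ωt f) y) ∧
    (∀ y : EuclideanSpace ℝ (Fin d), DifferentiableAt ℝ (conjOn d Ωt f₀) y) ∧
    1 / (4 * M) *
        ∫ y, ‖gradient (conjOn d Ωt f) y - gradient (conjOn d Ωt f₀) y‖ ^ 2
          ∂(P.map (gradient f₀))
      ≤ semiDual d Ωt P (P.map (gradient f₀)) f
        - semiDual d Ωt P (P.map (gradient f₀)) f₀ :=
  semiDual_stability_conjugate_general d M hM ΩP Ωt hPne hPcomp htcomp htconv hincl f₀ f hf₀smooth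
    hfsmooth hf₀hess hfhess P hPsupp
end

section
/- Let μ > 0 and let φ : ℝ^d → ℝ be differentiable and μ-strongly convex (that is, x ↦ φ(x) − (μ/2)‖x‖₂² is convex), and suppose ∇φ(x) = x for every x ∉ (0,1)^d. Then the restriction of ∇φ to [0,1]^d is a bijection from [0,1]^d onto [0,1]^d. -/
/-!
Strong convexity makes `∇φ` strongly monotone, `μ‖y - x‖² ≤ ⟪∇φ y - ∇φ x, y - x⟫`, hence
injective; it is also onto, because each tilt `φ - ⟪y, ·⟫` is coercive, so it has a minimiser, where
`∇φ = y`. Testing monotonicity against the points of the faces of the cube, which `∇φ` fixes,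
keeps every coordinate of `∇φ x` in `[0, 1]`; finally a preimage of a point of the cube either lies
in the open cube or is fixed by `∇φ`.
-/

open Set Filter
open scoped RealInnerProductSpace

section FirstOrder

variable {E : Type*} [NormedAddCommGroup E] [NormedSpace ℝ E]

lemma ConvexOn.add_apply_sub_le_of_hasFDerivAt {s : Set E} {f : E → ℝ} {f' : E →L[ℝ] ℝ}
    {x y : E} (hf : ConvexOn ℝ s f) (hx : x ∈ s) (hy : y ∈ s) (hf' : HasFDerivAt f f' x) :
    f x + f' (y - x) ≤ f y := by
  let ℓ : ℝ →ᵃ[ℝ] E := AffineMap.lineMap x y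
  have hℓ : HasFDerivAt f f' (ℓ 0) := by simpa [ℓ] using hf'
  have hslope := (hf.comp_affineMap ℓ).le_slope_of_hasDerivAt (by simpa [ℓ] using hx)
    (by simpa [ℓ] using hy) one_pos (hℓ.comp_hasDerivAt 0 AffineMap.hasDerivAt_lineMap)
  simpa [ℓ, slope_def_field, le_sub_iff_add_le'] using hslope

end FirstOrder

namespace StrongConvexOn

variable {E : Type*} [NormedAddCommGroup E] [InnerProductSpace ℝ E] [CompleteSpace E]
  {s : Set E} {μ : ℝ} {φ : E → ℝ}

lemma add_inner_add_le_of_hasGradientAt {φ' x y : E} (hφ : StrongConvexOn s μ φ) (hx : x ∈ s)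
    (hy : y ∈ s) (hφ' : HasGradientAt φ φ' x) :
    φ x + ⟪φ', y - x⟫ + μ / 2 * ‖y - x‖ ^ 2 ≤ φ y := by
  have hconv := strongConvexOn_iff_convex.1 hφ
  have hderiv := hφ'.hasFDerivAt.sub ((hasStrictFDerivAt_norm_sq x).hasFDerivAt.const_mul (μ / 2))
  have h := hconv.add_apply_sub_le_of_hasFDerivAt hx hy hderiv
  have hy_sq : ‖y‖ ^ 2 = ‖x‖ ^ 2 + 2 * ⟪x, y - x⟫ + ‖y - x‖ ^ 2 := by
    rw [← norm_add_sq_real, add_sub_cancel]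
  simp only [sub_apply, smul_apply, InnerProductSpace.toDual_apply_apply, innerSL_apply_apply,
    smul_eq_mul, nsmul_eq_mul, Nat.cast_ofNat, hy_sq] at h
  linarith

lemma mul_norm_sub_sq_le_inner_gradient_sub {x y : E} (hφ : StrongConvexOn s μ φ) (hx : x ∈ s)
    (hy : y ∈ s) (hdx : DifferentiableAt ℝ φ x) (hdy : DifferentiableAt ℝ φ y) :
    μ * ‖y - x‖ ^ 2 ≤ ⟪gradient φ y - gradient φ x, y - x⟫ := by
  have hxy := hφ.add_inner_add_le_of_hasGradientAt hx hy hdx.hasGradientAt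
  have hyx := hφ.add_inner_add_le_of_hasGradientAt hy hx hdy.hasGradientAt
  rw [← neg_sub y x, inner_neg_right, norm_neg] at hyx
  rw [inner_sub_left]
  linarith

lemma injOn_gradient (hφ : StrongConvexOn s μ φ) (hμ : 0 < μ)
    (hd : ∀ x ∈ s, DifferentiableAt ℝ φ x) : InjOn (gradient φ) s := by
  intro x hx y hy hxy
  have h := hφ.mul_norm_sub_sq_le_inner_gradient_sub hx hy (hd x hx) (hd y hy)
  rw [hxy, sub_self, inner_zero_left] at h
  have hsq : ‖y - x‖ ^ 2 ≤ 0 := nonpos_of_mul_nonpos_right h hμ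
  have hnorm : ‖y - x‖ = 0 := by nlinarith [norm_nonneg (y - x)]
  exact (sub_eq_zero.1 (norm_eq_zero.1 hnorm)).symm

lemma tendsto_cocompact_atTop [ProperSpace E] (hφ : StrongConvexOn univ μ φ) (hμ : 0 < μ)
    (hd : DifferentiableAt ℝ φ 0) : Tendsto φ (cocompact E) atTop := by
  set c := ‖gradient φ 0‖
  have hlower : ∀ z, φ 0 + ‖z‖ * (μ / 2 * ‖z‖ - c) ≤ φ z := fun z => by
    have h := hφ.add_inner_add_le_of_hasGradientAt (mem_univ 0) (mem_univ z) hd.hasGradientAt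
    rw [sub_zero] at h
    have hinner := neg_le_of_abs_le (abs_real_inner_le_norm (gradient φ 0) z)
    linarith
  have hquad : Tendsto (fun r : ℝ => φ 0 + r * (μ / 2 * r - c)) atTop atTop :=
    tendsto_atTop_add_const_left _ _ <| tendsto_id.atTop_mul_atTop₀ <|
      tendsto_atTop_add_const_right _ _ (tendsto_id.const_mul_atTop (by positivity))
  exact tendsto_atTop_mono hlower (hquad.comp tendsto_norm_cocompact_atTop)

lemma surjective_gradient [ProperSpace E] (hφ : StrongConvexOn univ μ φ) (hμ : 0 < μ)
    (hd : Differentiable ℝ φ) : Function.Surjective (gradient φ) := by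
  intro y
  set ψ : E → ℝ := fun z => φ z - ⟪y, z⟫
  have hψ : StrongConvexOn univ μ ψ := by
    have h := hφ.sub (uniformConcaveOn_zero.2 ((innerₛₗ ℝ y).concaveOn convex_univ))
    rw [add_zero] at h
    exact h
  have hψd (x : E) : HasGradientAt ψ (gradient φ x - y) x := by
    have hinner : HasFDerivAt (fun z => ⟪y, z⟫) (InnerProductSpace.toDual ℝ E y) x :=
      (InnerProductSpace.toDual ℝ E y).hasFDerivAt
    rw [hasGradientAt_iff_hasFDerivAt, map_sub]
    exact (hd x).hasGradientAt.hasFDerivAt.sub hinner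
  obtain ⟨x, hx⟩ := (hd.continuous.sub (continuous_const.inner continuous_id)).exists_forall_le
    (hψ.tendsto_cocompact_atTop hμ (hψd 0).differentiableAt)
  have hzero := IsLocalMin.hasFDerivAt_eq_zero (Eventually.of_forall hx) (hψd x).hasFDerivAt
  exact ⟨x, sub_eq_zero.1 ((InnerProductSpace.toDual ℝ E).map_eq_zero_iff.1 hzero)⟩

end StrongConvexOn

section MonotoneMap

variable {ι : Type*} [Fintype ι] [DecidableEq ι] {F : EuclideanSpace ℝ ι → EuclideanSpace ℝ ι}

lemma sub_mul_sub_nonneg_of_inner_sub_nonneg (hF : ∀ x y, 0 ≤ ⟪F y - F x, y - x⟫)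
    (x : EuclideanSpace ℝ ι) (i : ι) (t : ℝ)
    (hfix : F (x + (t - x i) • EuclideanSpace.single i 1) =
      x + (t - x i) • EuclideanSpace.single i 1) :
    0 ≤ (t - x i) * (t - F x i) := by
  have h := hF x (x + (t - x i) • EuclideanSpace.single i 1)
  rw [hfix, add_sub_cancel_left, real_inner_smul_right, real_inner_comm,
    EuclideanSpace.inner_single_left] at h
  simpa using h

lemma mapsTo_Icc_of_inner_sub_nonneg {a b : ℝ} (hF : ∀ x y, 0 ≤ ⟪F y - F x, y - x⟫)
    (hid : ∀ x, x ∉ {z : EuclideanSpace ℝ ι | ∀ i, z i ∈ Ioo a b} → F x = x) :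
    MapsTo F {z | ∀ i, z i ∈ Icc a b} {z | ∀ i, z i ∈ Icc a b} := by
  intro x hx
  by_cases hxO : x ∈ {z : EuclideanSpace ℝ ι | ∀ i, z i ∈ Ioo a b}
  · intro i
    have hface (t : ℝ) (ht : t ∉ Ioo a b) := sub_mul_sub_nonneg_of_inner_sub_nonneg hF x i t
      (hid _ fun h => ht (by simpa using h i))
    have hlow := hface a (by simp)
    have hupp := hface b (by simp)
    obtain ⟨hax, hxb⟩ := hxO i
    constructor <;> nlinarith
  · rw [hid x hxO]
    exact hx

end MonotoneMap

/-- **Strongly convex potentials that are the identity gradient outside the open unit cube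
push the unit cube onto itself.** If `φ : ℝ^d → ℝ` is differentiable and `μ`-strongly convex
(i.e. `x ↦ φ(x) − (μ/2)‖x‖²` is convex) and `∇φ(x) = x` for every `x ∉ (0,1)^d`, then the
restriction of `∇φ` to `[0,1]^d` is a bijection from `[0,1]^d` onto `[0,1]^d`. -/
theorem gradient_bijOn_unitCube
    (d : ℕ) (μ : ℝ) (hμ : 0 < μ) (φ : EuclideanSpace ℝ (Fin d) → ℝ)
    (hφ : Differentiable ℝ φ)
    (hconv : ConvexOn ℝ Set.univ (fun x => φ x - μ / 2 * ‖x‖ ^ 2))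
    (hout : ∀ x : EuclideanSpace ℝ (Fin d),
      x ∉ {z : EuclideanSpace ℝ (Fin d) | ∀ i, z i ∈ Set.Ioo (0 : ℝ) 1} → gradient φ x = x) :
    Set.BijOn (gradient φ)
      {z : EuclideanSpace ℝ (Fin d) | ∀ i, z i ∈ Set.Icc (0 : ℝ) 1}
      {z : EuclideanSpace ℝ (Fin d) | ∀ i, z i ∈ Set.Icc (0 : ℝ) 1} := by
  have hstrong : StrongConvexOn univ μ φ := strongConvexOn_iff_convex.2 hconv
  have hmono (x y : EuclideanSpace ℝ (Fin d)) : 0 ≤ ⟪gradient φ y - gradient φ x, y - x⟫ := by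
    simpa using (hstrong.mono hμ.le).mul_norm_sub_sq_le_inner_gradient_sub (mem_univ x)
      (mem_univ y) (hφ x) (hφ y)
  refine ⟨mapsTo_Icc_of_inner_sub_nonneg hmono hout,
    (hstrong.injOn_gradient hμ fun x _ => hφ x).mono (subset_univ _), ?_⟩
  intro y hy
  obtain ⟨x, rfl⟩ := hstrong.surjective_gradient hμ hφ y
  by_cases hx : x ∈ {z : EuclideanSpace ℝ (Fin d) | ∀ i, z i ∈ Ioo 0 1}
  · exact ⟨x, fun i => Ioo_subset_Icc_self (hx i), rfl⟩
  · rw [hout x hx] at hy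
    exact ⟨x, hy, rfl⟩
end

section
/- Kullback–Leibler divergence of the pushforward of the uniform measure under a gradient map: let φ : ℝ^d → ℝ be twice continuously differentiable with D²φ(x) positive definite for every x ∈ ℝ^d, and suppose ∇φ(x) = x for every x ∉ (0,1)^d. Let P be the uniform probability measure on [0,1]^d and Q = (∇φ)_# P. Then Q is absolutely continuous with respect to P and KL(Q ‖ P) = −∫_{[0,1]^d} log det D²φ(x) dx. -/
/-!
Positivity of `⟪D(∇φ)(x) v, v⟫` makes `∇φ` strictly monotone, hence injective, and makes each
`D(∇φ)(x)` invertible with positive determinant, so `∇φ` is an open map. Its range is then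
`∇φ([0,1]^d) ∪ ((0,1)^d)ᶜ`, which is closed, so `∇φ` is a bijection of `ℝ^d` mapping the cube onto
itself. The change of variables formula gives `P = (∇φ)_# (det D²φ · P)`, so the density of `Q`
with respect to `P` at `∇φ(x)` is `1 / det D²φ(x)`, and integrating its logarithm against
`Q = (∇φ)_# P` gives `-∫ log det D²φ dP`.
-/

open MeasureTheory Set RealInnerProductSpace Function

section InnerPos

variable {E : Type*} [NormedAddCommGroup E] [InnerProductSpace ℝ E]

lemma injective_of_inner_map_self_pos {A : E →ₗ[ℝ] E} (hA : ∀ v, v ≠ 0 → 0 < ⟪A v, v⟫) :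
    Injective A := by
  refine (injective_iff_map_eq_zero A).2 fun v hv => ?_
  by_contra hv0
  simpa [hv] using hA v hv0

lemma convex_setOf_inner_map_self_pos :
    Convex ℝ {A : E →L[ℝ] E | ∀ v, v ≠ 0 → 0 < ⟪A v, v⟫} := by
  simp only [ofPred_forall]
  exact convex_iInter₂ fun v _ => convex_halfSpace_gt
    ⟨fun A B => inner_add_left _ _ _, fun c A => real_inner_smul_left _ _ _⟩ 0

/-- The set of such maps is convex, contains the identity and avoids `det = 0`, so `det` keeps
the sign it has at the identity. -/
lemma det_pos_of_inner_map_self_pos [FiniteDimensional ℝ E] {A : E →L[ℝ] E}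
    (hA : ∀ v, v ≠ 0 → 0 < ⟪A v, v⟫) : 0 < A.det := by
  set S := {A : E →L[ℝ] E | ∀ v, v ≠ 0 → 0 < ⟪A v, v⟫}
  have hdet_ne : ∀ B ∈ S, B.det ≠ 0 := fun B hB =>
    (LinearEquiv.ofInjectiveEndo _ (injective_of_inner_map_self_pos hB)).isUnit_det'.ne_zero
  have hid : (1 : E →L[ℝ] E) ∈ S := fun v hv => by
    simpa using real_inner_self_pos.2 hv
  by_contra! hle
  obtain ⟨B, hB, hB0⟩ := convex_setOf_inner_map_self_pos.isPreconnected.intermediate_value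
    (show A ∈ S from hA) hid ContinuousLinearMap.continuous_det.continuousOn
    ⟨hle, by simp [ContinuousLinearMap.det]⟩
  exact hdet_ne B hB hB0

end InnerPos

section Gradient

variable {E : Type*} [NormedAddCommGroup E] [InnerProductSpace ℝ E] {g : E → E}

lemma injective_of_inner_fderiv_pos (hg : Differentiable ℝ g)
    (hpos : ∀ x v, v ≠ 0 → 0 < ⟪fderiv ℝ g x v, v⟫) : Injective g := by
  intro a b hab
  by_contra hne
  set u := a - b
  have hu : u ≠ 0 := sub_ne_zero.2 hne
  set h : ℝ → ℝ := fun t => ⟪g (b + t • u), u⟫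
  have hderiv : ∀ t, HasDerivAt h ⟪fderiv ℝ g (b + t • u) u, u⟫ t := fun t => by
    have hline : HasDerivAt (fun t : ℝ => b + t • u) u t := by
      simpa using ((hasDerivAt_id t).smul_const u).const_add b
    simpa using ((hg _).hasFDerivAt.comp_hasDerivAt t hline).inner ℝ (hasDerivAt_const t u)
  have hmono : StrictMono h :=
    strictMono_of_deriv_pos fun t => (hderiv t).deriv ▸ hpos _ u hu
  have h01 := hmono zero_lt_one
  simp only [h, zero_smul, add_zero, one_smul, u, add_sub_cancel, hab, lt_self_iff_false] at h01

lemma ContDiff.gradient [CompleteSpace E] {f : E → ℝ} {n : WithTop ℕ∞}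
    (hf : ContDiff ℝ (n + 1) f) : ContDiff ℝ n (gradient f) :=
  (InnerProductSpace.toDual ℝ E).symm.contDiff.comp (hf.fderiv_right le_rfl)

variable [FiniteDimensional ℝ E]

lemma isOpenMap_of_fderiv_injective (hg : ContDiff ℝ 1 g)
    (hinj : ∀ x, Injective (fderiv ℝ g x)) : IsOpenMap g :=
  isOpenMap_of_hasStrictFDerivAt_equiv
    (f' := fun x => (LinearEquiv.ofInjectiveEndo _ (hinj x)).toContinuousLinearEquiv)
    fun _ => hg.contDiffAt.hasStrictFDerivAt one_ne_zero

end Gradient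

section FixedOutside

variable {X : Type*} {g : X → X} {U K : Set X}

lemma surjective_of_isOpenMap_of_fixed_outside [TopologicalSpace X] [T2Space X]
    [PreconnectedSpace X] (hg : Continuous g) (hgo : IsOpenMap g) (hU : IsOpen U)
    (hK : IsCompact K) (hUK : U ⊆ K) (hfix : ∀ x ∉ U, g x = x) : Surjective g := by
  have hrange : range g = g '' K ∪ Uᶜ := by
    refine Subset.antisymm ?_ (union_subset (image_subset_range g K) fun y hy => ⟨y, hfix y hy⟩)
    rintro _ ⟨x, rfl⟩
    by_cases hx : x ∈ U
    · exact Or.inl ⟨x, hUK hx, rfl⟩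
    · exact Or.inr (by rwa [mem_compl_iff, hfix x hx])
  have hclopen : IsClopen (range g) :=
    ⟨hrange ▸ (hK.image hg).isClosed.union hU.isClosed_compl, hgo.isOpen_range⟩
  rcases isClopen_iff.1 hclopen with h | h
  · exact fun y => absurd (h ▸ mem_range_self y) (notMem_empty _)
  · exact range_eq_univ.1 h

/-- A point of `U` cannot be sent outside `U`, since the point outside is already its own image. -/
lemma image_eq_self_of_fixed_outside (hg : Bijective g) (hUK : U ⊆ K)
    (hfix : ∀ x ∉ U, g x = x) : g '' K = K := by
  have hmaps : ∀ x ∈ U, g x ∈ U := fun x hx => by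
    by_contra hgx
    exact hgx (by rwa [hg.1 (hfix _ hgx)])
  refine Subset.antisymm ?_ fun y hy => ?_
  · rintro _ ⟨x, hx, rfl⟩
    by_cases hxU : x ∈ U
    · exact hUK (hmaps x hxU)
    · rwa [hfix x hxU]
  · obtain ⟨x, rfl⟩ := hg.2 y
    by_cases hxU : x ∈ U
    · exact ⟨x, hUK hxU, rfl⟩
    · exact ⟨x, by rwa [← hfix x hxU], rfl⟩

end FixedOutside

namespace EuclideanSpace

variable {ι : Type*}

lemma isOpen_setOf_forall_mem_Ioo [Fintype ι] (a b : ℝ) :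
    IsOpen {z : EuclideanSpace ℝ ι | ∀ i, z i ∈ Ioo a b} := by
  have : {z : EuclideanSpace ℝ ι | ∀ i, z i ∈ Ioo a b} =
      equiv ι ℝ ⁻¹' univ.pi fun _ => Ioo a b := by
    ext; simp
  exact this ▸ (isOpen_set_pi finite_univ fun _ _ => isOpen_Ioo).preimage (equiv ι ℝ).continuous

lemma isCompact_setOf_forall_mem_Icc (a b : ℝ) :
    IsCompact {z : EuclideanSpace ℝ ι | ∀ i, z i ∈ Icc a b} := by
  have : {z : EuclideanSpace ℝ ι | ∀ i, z i ∈ Icc a b} =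
      (equiv ι ℝ).toHomeomorph ⁻¹' univ.pi fun _ => Icc a b := by
    ext; simp only [mem_ofPred_eq, mem_preimage, mem_univ_pi]; rfl
  exact this ▸ (equiv ι ℝ).toHomeomorph.isCompact_preimage.2
    (isCompact_univ_pi fun _ => isCompact_Icc)

end EuclideanSpace

section ChangeOfVariables

variable {E : Type*} [NormedAddCommGroup E] [NormedSpace ℝ E] [FiniteDimensional ℝ E]
  [MeasurableSpace E] [BorelSpace E] (μ : Measure E) {g : E → E} {s : Set E}

lemma measurable_ofReal_abs_det_fderiv (g : E → E) :
    Measurable fun x => ENNReal.ofReal |(fderiv ℝ g x).det| :=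
  (ContinuousLinearMap.continuous_det.measurable.comp (measurable_fderiv ℝ g)).abs.ennreal_ofReal

lemma restrict_absolutelyContinuous_withDensity_abs_det_fderiv (hs : MeasurableSet s)
    (hdet : ∀ x ∈ s, (fderiv ℝ g x).det ≠ 0) :
    μ.restrict s ≪ (μ.restrict s).withDensity fun x => ENNReal.ofReal |(fderiv ℝ g x).det| :=
  withDensity_absolutelyContinuous' (measurable_ofReal_abs_det_fderiv g).aemeasurable
    ((ae_restrict_iff' hs).2 (.of_forall fun x hx => by simpa using hdet x hx))

variable [μ.IsAddHaarMeasure]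

lemma map_restrict_withDensity_abs_det_fderiv (hs : MeasurableSet s) (hg : Differentiable ℝ g)
    (hinj : Injective g) (hgs : g '' s = s) :
    ((μ.restrict s).withDensity fun x => ENNReal.ofReal |(fderiv ℝ g x).det|).map g =
      μ.restrict s := by
  simpa [hgs] using map_withDensity_abs_det_fderiv_eq_addHaar μ hs.nullMeasurableSet
    (fun x _ => (hg x).hasFDerivAt.hasFDerivWithinAt) hinj.injOn

lemma map_restrict_absolutelyContinuous (hs : MeasurableSet s) (hg : Differentiable ℝ g)
    (hinj : Injective g) (hdet : ∀ x ∈ s, (fderiv ℝ g x).det ≠ 0) (hgs : g '' s = s) :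
    (μ.restrict s).map g ≪ μ.restrict s := by
  simpa only [map_restrict_withDensity_abs_det_fderiv μ hs hg hinj hgs] using
    (restrict_absolutelyContinuous_withDensity_abs_det_fderiv μ hs hdet).map
      hg.continuous.measurable

lemma integral_log_rnDeriv_map_restrict (hs : MeasurableSet s) (hg : Differentiable ℝ g)
    (hinj : Injective g) (hdet : ∀ x ∈ s, (fderiv ℝ g x).det ≠ 0) (hgs : g '' s = s) :
    ∫ y, Real.log (((μ.restrict s).map g).rnDeriv (μ.restrict s) y).toReal ∂(μ.restrict s).map g =
      -∫ x in s, Real.log |(fderiv ℝ g x).det| ∂μ := by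
  set P := μ.restrict s
  set w : E → ENNReal := fun x => ENNReal.ofReal |(fderiv ℝ g x).det|
  have hw0 : ∀ᵐ x ∂P, w x ≠ 0 :=
    (ae_restrict_iff' hs).2 (.of_forall fun x hx => by simpa [w] using hdet x hx)
  have hw_top : ∀ᵐ x ∂P, w x ≠ ⊤ := .of_forall fun _ => ENNReal.ofReal_ne_top
  have : SigmaFinite (P.withDensity w) := SigmaFinite.withDensity_of_ne_top hw_top
  have hemb : MeasurableEmbedding g := hg.continuous.measurableEmbedding hinj
  have hrn : (fun x => (P.map g).rnDeriv P (g x)) =ᵐ[P] fun x => (w x)⁻¹ := by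
    have hmap := hemb.rnDeriv_map P (P.withDensity w)
    rw [map_restrict_withDensity_abs_det_fderiv μ hs hg hinj hgs] at hmap
    filter_upwards [(restrict_absolutelyContinuous_withDensity_abs_det_fderiv μ hs hdet).ae_le hmap,
      P.rnDeriv_withDensity_right P (measurable_ofReal_abs_det_fderiv g).aemeasurable hw0 hw_top,
      P.rnDeriv_self] with x hx hright hself
    rw [hx, hright, hself, mul_one]
  rw [hemb.integral_map, ← integral_neg]
  refine integral_congr_ae (hrn.mono fun x hx => ?_)
  simp [hx, w]

end ChangeOfVariables

/-- **Kullback–Leibler divergence of the pushforward of the uniform measure under a gradient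
map.** Let `φ : ℝ^d → ℝ` be twice continuously differentiable with positive definite Hessian
everywhere and `∇φ(x) = x` for `x ∉ (0,1)^d`. Let `P` be the uniform probability measure on
`[0,1]^d` (the restriction of Lebesgue measure to the unit cube) and `Q = (∇φ)_# P`. Then
`Q ≪ P` and `KL(Q‖P) = ∫ log(dQ/dP) dQ = −∫_{[0,1]^d} log det D²φ(x) dx`. -/
theorem kl_pushforward_gradient
    (d : ℕ) (φ : EuclideanSpace ℝ (Fin d) → ℝ) (hφ : ContDiff ℝ 2 φ)
    (hpos : ∀ x : EuclideanSpace ℝ (Fin d), ∀ v : EuclideanSpace ℝ (Fin d), v ≠ 0 →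
      0 < ⟪fderiv ℝ (gradient φ) x v, v⟫)
    (hout : ∀ x : EuclideanSpace ℝ (Fin d),
      x ∉ {z : EuclideanSpace ℝ (Fin d) | ∀ i, z i ∈ Set.Ioo (0 : ℝ) 1} →
      gradient φ x = x) :
    (((volume : Measure (EuclideanSpace ℝ (Fin d))).restrict
        {z | ∀ i, z i ∈ Set.Icc (0 : ℝ) 1}).map (gradient φ)) ≪
      ((volume : Measure (EuclideanSpace ℝ (Fin d))).restrict
        {z | ∀ i, z i ∈ Set.Icc (0 : ℝ) 1}) ∧
    (∫ y, Real.log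
        ((((((volume : Measure (EuclideanSpace ℝ (Fin d))).restrict
              {z | ∀ i, z i ∈ Set.Icc (0 : ℝ) 1}).map (gradient φ)).rnDeriv
            ((volume : Measure (EuclideanSpace ℝ (Fin d))).restrict
              {z | ∀ i, z i ∈ Set.Icc (0 : ℝ) 1})) y).toReal)
        ∂(((volume : Measure (EuclideanSpace ℝ (Fin d))).restrict
            {z | ∀ i, z i ∈ Set.Icc (0 : ℝ) 1}).map (gradient φ)))
      = - ∫ x in {z : EuclideanSpace ℝ (Fin d) | ∀ i, z i ∈ Set.Icc (0 : ℝ) 1},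
            Real.log ((fderiv ℝ (gradient φ) x).det) ∂volume := by
  set K := {z : EuclideanSpace ℝ (Fin d) | ∀ i, z i ∈ Icc (0 : ℝ) 1}
  have hg : ContDiff ℝ 1 (gradient φ) := hφ.gradient
  have hgd : Differentiable ℝ (gradient φ) := hg.differentiable one_ne_zero
  have hK : IsCompact K := EuclideanSpace.isCompact_setOf_forall_mem_Icc 0 1
  have hUK : {z : EuclideanSpace ℝ (Fin d) | ∀ i, z i ∈ Ioo (0 : ℝ) 1} ⊆ K :=
    fun z hz i => Ioo_subset_Icc_self (hz i)
  have hdet : ∀ x ∈ K, (fderiv ℝ (gradient φ) x).det ≠ 0 :=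
    fun x _ => (det_pos_of_inner_map_self_pos (hpos x)).ne'
  have hinj : Injective (gradient φ) := injective_of_inner_fderiv_pos hgd hpos
  have hsurj : Surjective (gradient φ) :=
    surjective_of_isOpenMap_of_fixed_outside hg.continuous
      (isOpenMap_of_fderiv_injective hg fun x => injective_of_inner_map_self_pos (hpos x))
      (EuclideanSpace.isOpen_setOf_forall_mem_Ioo 0 1) hK hUK hout
  have hgK : gradient φ '' K = K := image_eq_self_of_fixed_outside ⟨hinj, hsurj⟩ hUK hout
  refine ⟨map_restrict_absolutelyContinuous volume hK.isClosed.measurableSet hgd hinj hdet hgK, ?_⟩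
  rw [integral_log_rnDeriv_map_restrict volume hK.isClosed.measurableSet hgd hinj hdet hgK]
  simp only [abs_of_pos (det_pos_of_inner_map_self_pos (hpos _))]
end
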